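/- For every n ≥ 1 and every unit vector v in the subspace span{e₀, …, e_{n−1}} of ℓ²(ℤ), there exists an element g of the group G(T₊, U(2)) such that g·v = e₀. -/

import Mathlib

set_option maxHeartbeats 2000000

noncomputable section

open scoped InnerProductSpace

abbrev H2 : Type := lp (fun _ : ℤ => ℂ) 2

def e (k : ℤ) : H2 := lp.single 2 k (1 : ℂ)

def spanE01 : Submodule ℂ H2 := Submodule.span ℂ {e 0, e 1}

def U2 : Set (unitary (H2 →L[ℂ] H2)) :=
  {g | (∀ x ∈ spanE01, (g : H2 →L[ℂ] H2) x ∈ spanE01) ∧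
       ∀ x ∈ spanE01ᗮ, (g : H2 →L[ℂ] H2) x = x}

def GTU (T : unitary (H2 →L[ℂ] H2)) : Subgroup (unitary (H2 →L[ℂ] H2)) :=
  Subgroup.closure ({T} ∪ U2)

/-- `Vₙ = span {e₀, …, e_{n-1}}`. -/
def Vn (n : ℕ) : Submodule ℂ H2 :=
  Submodule.span ℂ (Set.range fun i : Fin n => e (i : ℕ))

/-! ### Auxiliary lemmas -/

lemma inner_e_left (j : ℤ) (x : H2) : ⟪e j, x⟫_ℂ = x j := by
  simp [e, lp.inner_single_left]

lemma inner_e_e (j k : ℤ) : ⟪e j, e k⟫_ℂ = if k = j then 1 else 0 := by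
  rw [inner_e_left]
  by_cases h : k = j
  · simp [h, e, lp.single_apply_self]
  · rw [if_neg h]
    exact lp.single_apply_ne _ _ _ (by simpa using Ne.symm h)

/-- Givens-type operator: identity plus rank-two perturbation supported on span{e0,e1}. -/
def phi (a b : ℂ) : H2 →L[ℂ] H2 :=
  ContinuousLinearMap.id ℂ H2
    + (innerSL ℂ (e 0)).smulRight ((starRingEnd ℂ a - 1) • e 0 - b • e 1)
    + (innerSL ℂ (e 1)).smulRight ((starRingEnd ℂ b) • e 0 + (a - 1) • e 1)

lemma phi_apply (a b : ℂ) (x : H2) :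
    phi a b x = x + ⟪e 0, x⟫_ℂ • ((starRingEnd ℂ a - 1) • e 0 - b • e 1)
      + ⟪e 1, x⟫_ℂ • ((starRingEnd ℂ b) • e 0 + (a - 1) • e 1) := by
  rfl

lemma phi_comp (a b : ℂ) (h : starRingEnd ℂ a * a + starRingEnd ℂ b * b = 1) :
    phi (starRingEnd ℂ a) (-b) * phi a b = 1 := by
  refine ContinuousLinearMap.ext fun x => ?_
  simp only [ContinuousLinearMap.mul_apply, ContinuousLinearMap.one_apply, phi_apply,
    inner_add_right, inner_smul_right, inner_sub_right, inner_e_e, map_sub, map_one, map_mul,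
    Complex.conj_conj, map_neg]
  norm_num
  set c0 := ⟪e 0, x⟫_ℂ with hc0
  set c1 := ⟪e 1, x⟫_ℂ with hc1
  match_scalars
  all_goals (first
    | linear_combination c0 * h
    | linear_combination c1 * h
    | linear_combination (-c0) * h
    | linear_combination (-c1) * h
    | linear_combination (c0 + c1) * h
    | linear_combination (-c0 - c1) * h
    | ring)

lemma phi_adjoint (a b : ℂ) :
    star (phi a b) = phi (starRingEnd ℂ a) (-b) := by
  rw [ContinuousLinearMap.star_eq_adjoint]
  rw [eq_comm, ContinuousLinearMap.eq_adjoint_iff]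
  intro x y
  simp only [phi_apply, inner_add_left, inner_add_right, inner_smul_left, inner_smul_right,
    inner_sub_left, inner_sub_right, inner_e_e, map_sub, map_add, map_mul, map_one,
    Complex.conj_conj, map_neg, MonoidWithZeroHom.map_ite_one_zero]
  norm_num
  rw [← inner_conj_symm x (e 0), ← inner_conj_symm x (e 1)]
  ring

lemma phi_mem_unitary (a b : ℂ) (h : starRingEnd ℂ a * a + starRingEnd ℂ b * b = 1) :
    phi a b ∈ unitary (H2 →L[ℂ] H2) := by
  have h' : starRingEnd ℂ (starRingEnd ℂ a) * starRingEnd ℂ a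
      + starRingEnd ℂ (-b) * (-b) = 1 := by
    simp only [Complex.conj_conj, map_neg]
    linear_combination h
  constructor
  · rw [phi_adjoint]; exact phi_comp a b h
  · rw [phi_adjoint]
    have := phi_comp (starRingEnd ℂ a) (-b) h'
    simpa only [Complex.conj_conj, neg_neg] using this

def phiU (a b : ℂ) (h : starRingEnd ℂ a * a + starRingEnd ℂ b * b = 1) :
    unitary (H2 →L[ℂ] H2) := ⟨phi a b, phi_mem_unitary a b h⟩

lemma e0_mem_spanE01 : e 0 ∈ spanE01 :=
  Submodule.subset_span (by simp)

lemma e1_mem_spanE01 : e 1 ∈ spanE01 :=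
  Submodule.subset_span (by simp)

lemma phiU_mem_U2 (a b : ℂ) (h : starRingEnd ℂ a * a + starRingEnd ℂ b * b = 1) :
    phiU a b h ∈ U2 := by
  constructor
  · intro x hx
    rw [show ((phiU a b h : unitary (H2 →L[ℂ] H2)) : H2 →L[ℂ] H2) = phi a b from rfl, phi_apply]
    refine Submodule.add_mem _ (Submodule.add_mem _ hx ?_) ?_
    · exact Submodule.smul_mem _ _ (Submodule.sub_mem _
        (Submodule.smul_mem _ _ e0_mem_spanE01) (Submodule.smul_mem _ _ e1_mem_spanE01))
    · exact Submodule.smul_mem _ _ (Submodule.add_mem _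
        (Submodule.smul_mem _ _ e0_mem_spanE01) (Submodule.smul_mem _ _ e1_mem_spanE01))
  · intro x hx
    rw [Submodule.mem_orthogonal] at hx
    have h0 : ⟪e 0, x⟫_ℂ = 0 := hx _ e0_mem_spanE01
    have h1 : ⟪e 1, x⟫_ℂ = 0 := hx _ e1_mem_spanE01
    rw [show ((phiU a b h : unitary (H2 →L[ℂ] H2)) : H2 →L[ℂ] H2) = phi a b from rfl, phi_apply,
      h0, h1]
    simp

lemma phi_e_other (a b : ℂ) (k : ℤ) (h0 : k ≠ 0) (h1 : k ≠ 1) :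
    phi a b (e k) = e k := by
  rw [phi_apply, inner_e_e, inner_e_e, if_neg h0, if_neg h1]
  simp

lemma phi_maps (a b : ℂ) (h : starRingEnd ℂ a * a + starRingEnd ℂ b * b = 1) :
    phi a b (a • e 0 + b • e 1) = e 0 := by
  simp only [phi_apply, inner_add_right, inner_smul_right, inner_e_e]
  norm_num
  match_scalars
  · linear_combination h
  · ring

/-! ### Powers of the shift -/

lemma T_pow (T : unitary (H2 →L[ℂ] H2))
    (hT : ∀ k : ℤ, (T : H2 →L[ℂ] H2) (e k) = e (k + 1)) (m : ℕ) (k : ℤ) :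
    ((T ^ m : unitary (H2 →L[ℂ] H2)) : H2 →L[ℂ] H2) (e k) = e (k + m) := by
  induction m generalizing k with
  | zero =>
    have h1 : ((T ^ 0 : unitary (H2 →L[ℂ] H2)) : H2 →L[ℂ] H2) = 1 := by rw [pow_zero]; rfl
    rw [h1, ContinuousLinearMap.one_apply]
    norm_num
  | succ m ih =>
    have h1 : (T ^ (m + 1) : unitary (H2 →L[ℂ] H2)) = T ^ m * T := by rw [pow_succ]
    have h2 : ((T ^ m * T : unitary (H2 →L[ℂ] H2)) : H2 →L[ℂ] H2)
        = ((T ^ m : unitary (H2 →L[ℂ] H2)) : H2 →L[ℂ] H2) * (T : H2 →L[ℂ] H2) := rfl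
    rw [h1, h2, ContinuousLinearMap.mul_apply, hT, ih]
    congr 1
    push_cast
    ring

lemma T_pow_inv (T : unitary (H2 →L[ℂ] H2))
    (hT : ∀ k : ℤ, (T : H2 →L[ℂ] H2) (e k) = e (k + 1)) (m : ℕ) (k : ℤ) :
    (((T ^ m)⁻¹ : unitary (H2 →L[ℂ] H2)) : H2 →L[ℂ] H2) (e k) = e (k - m) := by
  have hcomp : ∀ x : H2,
      (((T ^ m)⁻¹ : unitary (H2 →L[ℂ] H2)) : H2 →L[ℂ] H2)
        (((T ^ m : unitary (H2 →L[ℂ] H2)) : H2 →L[ℂ] H2) x) = x := by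
    intro x
    have h1 : ((T ^ m)⁻¹ * T ^ m : unitary (H2 →L[ℂ] H2)) = 1 := inv_mul_cancel _
    calc (((T ^ m)⁻¹ : unitary (H2 →L[ℂ] H2)) : H2 →L[ℂ] H2)
          (((T ^ m : unitary (H2 →L[ℂ] H2)) : H2 →L[ℂ] H2) x)
        = (((T ^ m)⁻¹ * T ^ m : unitary (H2 →L[ℂ] H2)) : H2 →L[ℂ] H2) x := rfl
      _ = x := by rw [h1]; rfl
  have := hcomp (e (k - m))
  rwa [T_pow T hT m (k - m), sub_add_cancel] at this

/-! ### The main induction -/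

lemma e_mem_Vn (n : ℕ) (i : ℕ) (hi : i < n) : e i ∈ Vn n :=
  Submodule.subset_span ⟨⟨i, hi⟩, rfl⟩

lemma claimA (T : unitary (H2 →L[ℂ] H2))
    (hT : ∀ k : ℤ, (T : H2 →L[ℂ] H2) (e k) = e (k + 1)) :
    ∀ n : ℕ, ∀ v ∈ Vn (n + 1), ∃ g ∈ GTU T, (g : H2 →L[ℂ] H2) v = (‖v‖ : ℂ) • e 0 := by
  intro n
  induction n with
  | zero =>
    intro v hv
    rw [Vn, Submodule.mem_span_range_iff_exists_fun] at hv
    obtain ⟨c, hc⟩ := hv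
    rw [Fin.sum_univ_one] at hc
    have hc' : v = c 0 • e 0 := by rw [← hc]; norm_num
    have hnorm : ‖v‖ = ‖c 0‖ := by
      rw [hc', norm_smul]
      have : ‖e (0 : ℤ)‖ = 1 := by
        have h1 : ⟪e (0:ℤ), e (0:ℤ)⟫_ℂ = 1 := by rw [inner_e_e, if_pos rfl]
        have h2 := norm_sq_eq_re_inner (𝕜 := ℂ) (e (0:ℤ))
        rw [h1] at h2
        simp only [RCLike.one_re] at h2
        nlinarith [norm_nonneg (e (0:ℤ))]
      rw [this, mul_one]
    by_cases h0 : c 0 = 0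
    · refine ⟨1, Subgroup.one_mem _, ?_⟩
      have h1 : ((1 : unitary (H2 →L[ℂ] H2)) : H2 →L[ℂ] H2) = 1 := rfl
      rw [h1, ContinuousLinearMap.one_apply, hc', h0]
      simp
    · set a : ℂ := c 0 / ‖c 0‖ with ha
      have hna : ‖c 0‖ ≠ 0 := by simpa using h0
      have habs : starRingEnd ℂ (c 0) * c 0 = (‖c 0‖ : ℂ) * (‖c 0‖ : ℂ) := by
        rw [mul_comm, Complex.mul_conj, Complex.normSq_eq_norm_sq]
        push_cast
        ring
      have hcond : starRingEnd ℂ a * a + starRingEnd ℂ (0:ℂ) * (0:ℂ) = 1 := by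
        rw [ha]
        simp only [map_zero, mul_zero, add_zero, map_div₀, Complex.conj_ofReal]
        rw [div_mul_div_comm, habs, div_self]
        exact mul_ne_zero (by exact_mod_cast hna) (by exact_mod_cast hna)
      refine ⟨phiU a 0 hcond, Subgroup.subset_closure (Set.mem_union_right _
        (phiU_mem_U2 a 0 hcond)), ?_⟩
      have key : phi a 0 (a • e 0) = e 0 := by
        have := phi_maps a 0 hcond
        simpa using this
      have hne : (‖c 0‖ : ℂ) ≠ 0 := by exact_mod_cast hna
      have hv2 : v = (‖c 0‖ : ℂ) • (a • e 0) := by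
        rw [hc', smul_smul, ha, mul_comm, div_mul_cancel₀ _ hne]
      rw [show ((phiU a 0 hcond : unitary (H2 →L[ℂ] H2)) : H2 →L[ℂ] H2) = phi a 0 from rfl]
      calc phi a 0 v = phi a 0 ((‖c 0‖ : ℂ) • (a • e 0)) := by rw [← hv2]
        _ = (‖c 0‖ : ℂ) • e 0 := by rw [map_smul, key]
        _ = (‖v‖ : ℂ) • e 0 := by rw [hnorm]
  | succ n ih =>
    intro v hv
    rw [Vn, Submodule.mem_span_range_iff_exists_fun] at hv
    obtain ⟨c, hc⟩ := hv
    rw [Fin.sum_univ_castSucc, Fin.sum_univ_castSucc] at hc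
    set α := c (Fin.last n).castSucc with hα
    set β := c (Fin.last (n + 1)) with hβ
    set u : H2 := ∑ i : Fin n, c (i.castSucc.castSucc) • e (i : ℕ) with hu
    have hc' : u + α • e n + β • e (n + 1 : ℕ) = v := by
      rw [← hc]
      simp only [hu, hα, hβ, Fin.coe_castSucc, Fin.val_last]
    have hu_mem : u ∈ Vn (n + 1) := by
      refine Submodule.sum_mem _ fun i _ => Submodule.smul_mem _ _ ?_
      exact e_mem_Vn (n + 1) i (by omega)
    by_cases h0 : α = 0 ∧ β = 0
    · have hv2 : v = u := by rw [← hc', h0.1, h0.2]; simp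
      obtain ⟨g, hg, hgv⟩ := ih u hu_mem
      exact ⟨g, hg, by rw [hv2]; exact hgv⟩
    · have hpos : 0 < Complex.normSq α + Complex.normSq β := by
        rcases (not_and_or.mp h0) with h | h
        · have := Complex.normSq_pos.mpr h
          nlinarith [Complex.normSq_nonneg β]
        · have := Complex.normSq_pos.mpr h
          nlinarith [Complex.normSq_nonneg α]
      set r : ℝ := Real.sqrt (Complex.normSq α + Complex.normSq β) with hrdef
      have hr_pos : 0 < r := Real.sqrt_pos.mpr hpos
      have hr_ne : (r : ℂ) ≠ 0 := by
        simp only [ne_eq, Complex.ofReal_eq_zero]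
        exact ne_of_gt hr_pos
      have hr_sq : (r : ℂ) * r = (Complex.normSq α : ℂ) + (Complex.normSq β : ℂ) := by
        rw [← Complex.ofReal_mul, hrdef, Real.mul_self_sqrt hpos.le, Complex.ofReal_add]
      have hne_c : (r : ℂ) * (r : ℂ) ≠ 0 := mul_ne_zero hr_ne hr_ne
      set a : ℂ := α / r with ha
      set b : ℂ := β / r with hb
      have hsum : starRingEnd ℂ α * α + starRingEnd ℂ β * β = (r : ℂ) * r := by
        rw [mul_comm _ α, mul_comm _ β, Complex.mul_conj, Complex.mul_conj, hr_sq]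
      have hcond : starRingEnd ℂ a * a + starRingEnd ℂ b * b = 1 := by
        rw [ha, hb]
        simp only [map_div₀, Complex.conj_ofReal]
        rw [div_mul_div_comm, div_mul_div_comm, ← add_div, hsum,
          div_self hne_c]
      set g1 : unitary (H2 →L[ℂ] H2) := T ^ n * phiU a b hcond * (T ^ n)⁻¹ with hg1
      have hg1_mem : g1 ∈ GTU T := by
        have hTmem : T ∈ GTU T := Subgroup.subset_closure (Set.mem_union_left _ rfl)
        have hphi : phiU a b hcond ∈ GTU T :=
          Subgroup.subset_closure (Set.mem_union_right _ (phiU_mem_U2 a b hcond))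
        exact mul_mem (mul_mem (pow_mem hTmem n) hphi) (inv_mem (pow_mem hTmem n))
      have hg1_apply : ∀ x : H2, (g1 : H2 →L[ℂ] H2) x
          = ((T ^ n : unitary (H2 →L[ℂ] H2)) : H2 →L[ℂ] H2) ((phi a b)
            ((((T ^ n)⁻¹ : unitary (H2 →L[ℂ] H2)) : H2 →L[ℂ] H2) x)) := fun x => rfl
      have hg1_e : ∀ k : ℤ, k - n ≠ 0 → k - n ≠ 1 → (g1 : H2 →L[ℂ] H2) (e k) = e k := by
        intro k hk0 hk1
        rw [hg1_apply, T_pow_inv T hT, phi_e_other a b _ hk0 hk1, T_pow T hT, sub_add_cancel]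
      have hg1_pair : (g1 : H2 →L[ℂ] H2) (α • e (n : ℤ) + β • e ((n : ℤ) + 1))
          = (r : ℂ) • e (n : ℤ) := by
        have h1 : α • e (n : ℤ) + β • e ((n : ℤ) + 1)
            = (r : ℂ) • (a • e (n : ℤ) + b • e ((n : ℤ) + 1)) := by
          rw [smul_add, smul_smul, smul_smul, ha, hb, mul_div_cancel₀ _ hr_ne,
            mul_div_cancel₀ _ hr_ne]
        have h2 : (((T ^ n)⁻¹ : unitary (H2 →L[ℂ] H2)) : H2 →L[ℂ] H2)
            (a • e (n : ℤ) + b • e ((n : ℤ) + 1)) = a • e 0 + b • e 1 := by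
          rw [map_add, map_smul, map_smul, T_pow_inv T hT, T_pow_inv T hT]
          norm_num
        calc (g1 : H2 →L[ℂ] H2) (α • e (n : ℤ) + β • e ((n : ℤ) + 1))
            = (r : ℂ) • (g1 : H2 →L[ℂ] H2) (a • e (n : ℤ) + b • e ((n : ℤ) + 1)) := by
              rw [h1, map_smul]
          _ = (r : ℂ) • e (n : ℤ) := by
              rw [hg1_apply, h2, phi_maps a b hcond, T_pow T hT, zero_add]
      have hc'' : u + (α • e (n : ℤ) + β • e ((n : ℤ) + 1)) = v := by
        rw [← hc', add_assoc]
        norm_num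
      have hg1_u : (g1 : H2 →L[ℂ] H2) u = u := by
        rw [hu, map_sum]
        refine Finset.sum_congr rfl fun i _ => ?_
        rw [map_smul, hg1_e ((i : ℕ) : ℤ) (by have := i.isLt; omega)
          (by have := i.isLt; omega)]
      have hw_val : (g1 : H2 →L[ℂ] H2) v = u + (r : ℂ) • e (n : ℤ) := by
        rw [← hc'', map_add, hg1_u, hg1_pair]
      have hw_mem : u + (r : ℂ) • e (n : ℤ) ∈ Vn (n + 1) :=
        Submodule.add_mem _ hu_mem (Submodule.smul_mem _ _ (e_mem_Vn (n + 1) n (by omega)))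
      have hw_norm : ‖u + (r : ℂ) • e (n : ℤ)‖ = ‖v‖ := by
        rw [← hw_val]
        exact Unitary.norm_map g1 v
      obtain ⟨g, hg, hgw⟩ := ih _ hw_mem
      refine ⟨g * g1, mul_mem hg hg1_mem, ?_⟩
      have hmul : ((g * g1 : unitary (H2 →L[ℂ] H2)) : H2 →L[ℂ] H2) v
          = (g : H2 →L[ℂ] H2) ((g1 : H2 →L[ℂ] H2) v) := rfl
      rw [hmul, hw_val, hgw, hw_norm]


theorem stmt2 (T : unitary (H2 →L[ℂ] H2))
    (hT : ∀ k : ℤ, (T : H2 →L[ℂ] H2) (e k) = e (k + 1))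
    (n : ℕ) (hn : 1 ≤ n)
    (v : H2) (hv : v ∈ Vn n) (hv_norm : ‖v‖ = 1) :
    ∃ g ∈ GTU T, (g : H2 →L[ℂ] H2) v = e 0 := by
  obtain ⟨m, rfl⟩ : ∃ m, n = m + 1 := ⟨n - 1, by omega⟩
  obtain ⟨g, hg, hgv⟩ := claimA T hT m v hv
  exact ⟨g, hg, by rw [hgv, hv_norm]; simp⟩
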